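/- arXiv:2309.00791 — 4 statements merged into one kernel-verified Lean document; each statement's English description precedes it below -/
import Mathlib

section
/- Let c > 1, p > 0, ω = c^{-1/2}, and ψ_ω(x) = c^{-1/p}φ_c(x), where φ_c solves -c φ'' + (c-1)φ - φ^{p+1} = 0. Assume ω ↦ ψ_ω is differentiable. Define Ψ_c = -(1/2)ω^{1-2/p} ∂_ω ψ_ω. Then S_c''(φ_c)Ψ_c = φ_c, where S_c''(φ_c)f = c∂_{xx}f + (1-c)f + (p+1)φ_c^p f. -/
open Real

/-- `S_c''(φ_c) Ψ_c = φ_c`, where `Ψ_c = -(1/2) ω^{1-2/p} ∂_ω ψ_ω`, `ω = c^{-1/2}`,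
`ψ_ω = c^{-1/p} φ_c`. -/
theorem stmt8 (c p : ℝ) (hc : 1 < c) (hp : 0 < p) (φ : ℝ → ℝ)
    (hsmooth : ContDiff ℝ (⊤ : ℕ∞) φ) (hpos : ∀ x, 0 < φ x)
    (hODE : ∀ x, -c * deriv (deriv φ) x + (c - 1) * φ x - φ x ^ (p + 1) = 0)
    (ψ Dψ : ℝ → ℝ → ℝ)
    (hψeq : ∀ ω ∈ Set.Ioo (0 : ℝ) 1, ∀ x,
      -deriv (deriv (ψ ω)) x + (1 - ω ^ 2) * ψ ω x - ψ ω x ^ (p + 1) = 0)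
    (hlink : ∀ x, ψ (c ^ (-(1 : ℝ) / 2)) x = c ^ (-(1 : ℝ) / p) * φ x)
    (hDψ : ∀ ω x, HasDerivAt (fun w => ψ w x) (Dψ ω x) ω)
    (hcomm : ∀ ω x, HasDerivAt (fun w => deriv (deriv (ψ w)) x)
      (deriv (deriv (Dψ ω)) x) ω)
    (Ψ : ℝ → ℝ)
    (hΨ : ∀ x, Ψ x = -(1 / 2) * (c ^ (-(1 : ℝ) / 2)) ^ (1 - 2 / p)
      * Dψ (c ^ (-(1 : ℝ) / 2)) x) :
    ∀ x, c * deriv (deriv Ψ) x + (1 - c) * Ψ x + (p + 1) * φ x ^ p * Ψ x = φ x := by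
  intro x
  have hc0 : (0:ℝ) < c := lt_trans one_pos hc
  set ω₀ : ℝ := c ^ (-(1:ℝ)/2) with hω₀
  have hω₀pos : 0 < ω₀ := Real.rpow_pos_of_pos hc0 _
  have hω₀lt : ω₀ < 1 := Real.rpow_lt_one_of_one_lt_of_neg hc (by norm_num)
  have hmem : ω₀ ∈ Set.Ioo (0:ℝ) 1 := ⟨hω₀pos, hω₀lt⟩
  have hψx : ψ ω₀ x = c ^ (-(1:ℝ)/p) * φ x := hlink x
  have hψpos : 0 < ψ ω₀ x := by
    rw [hψx]
    exact mul_pos (Real.rpow_pos_of_pos hc0 _) (hpos x)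
  -- derivative in ω of the ODE
  have hF : HasDerivAt
      (fun w => -deriv (deriv (ψ w)) x + (1 - w ^ 2) * ψ w x - ψ w x ^ (p+1))
      (-deriv (deriv (Dψ ω₀)) x + ((-(2*ω₀)) * ψ ω₀ x + (1 - ω₀ ^ 2) * Dψ ω₀ x)
        - (p+1) * ψ ω₀ x ^ p * Dψ ω₀ x) ω₀ := by
    have h1 := (hcomm ω₀ x).neg
    have ha : HasDerivAt (fun w : ℝ => 1 - w^2) (-(2*ω₀)) ω₀ := by
      simpa using ((hasDerivAt_pow 2 ω₀).const_sub 1)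
    have h2 := ha.mul (hDψ ω₀ x)
    have h3 : HasDerivAt (fun w => ψ w x ^ (p+1)) ((p+1) * ψ ω₀ x ^ p * Dψ ω₀ x) ω₀ := by
      have := (Real.hasDerivAt_rpow_const (p := p+1) (Or.inl hψpos.ne')).comp ω₀ (hDψ ω₀ x)
      simpa [Function.comp_def, add_sub_cancel_right, mul_assoc] using this
    exact (h1.add h2).sub h3
  have hDzero : -deriv (deriv (Dψ ω₀)) x + ((-(2*ω₀)) * ψ ω₀ x + (1 - ω₀ ^ 2) * Dψ ω₀ x)
      - (p+1) * ψ ω₀ x ^ p * Dψ ω₀ x = 0 := by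
    have heq : (fun w => -deriv (deriv (ψ w)) x + (1 - w ^ 2) * ψ w x - ψ w x ^ (p+1))
        =ᶠ[nhds ω₀] fun _ => (0:ℝ) := by
      filter_upwards [isOpen_Ioo.mem_nhds hmem] with w hw
      exact hψeq w hw x
    exact (hF.congr_of_eventuallyEq heq.symm).unique (hasDerivAt_const ω₀ 0)
  -- second derivative of Ψ
  set k : ℝ := -(1/2) * ω₀ ^ ((1:ℝ) - 2/p) with hk
  have hΨfun : Ψ = fun y => k * Dψ ω₀ y := by
    funext y
    exact hΨ y
  have hd1 : deriv (fun y => k * Dψ ω₀ y) = fun y => k * deriv (Dψ ω₀) y := by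
    funext y
    exact deriv_const_mul_field k
  have hΨdd : deriv (deriv Ψ) x = k * deriv (deriv (Dψ ω₀)) x := by
    rw [hΨfun, hd1, deriv_const_mul_field k]
  -- algebraic identities on powers of c
  have hK : c * ω₀ ^ ((1:ℝ) - 2/p) * ω₀ * c ^ (-(1:ℝ)/p) = 1 := by
    rw [hω₀, ← Real.rpow_mul hc0.le]
    rw [show (c : ℝ) * c ^ ((-(1:ℝ)/2) * ((1:ℝ) - 2/p)) * c ^ (-(1:ℝ)/2) * c ^ (-(1:ℝ)/p)
        = c ^ ((1:ℝ) + ((-(1:ℝ)/2) * ((1:ℝ) - 2/p)) + (-(1:ℝ)/2) + (-(1:ℝ)/p)) by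
      rw [Real.rpow_add hc0, Real.rpow_add hc0, Real.rpow_add hc0, Real.rpow_one]]
    rw [show (1:ℝ) + ((-(1:ℝ)/2) * ((1:ℝ) - 2/p)) + (-(1:ℝ)/2) + (-(1:ℝ)/p) = 0 by ring]
    exact Real.rpow_zero c
  have hKφ : c * k * (-(2*ω₀)) * ψ ω₀ x = φ x := by
    rw [hψx, hk]
    linear_combination (φ x) * hK
  have hω2 : c * (1 - ω₀ ^ 2) = c - 1 := by
    have : ω₀ ^ 2 = c⁻¹ := by
      rw [hω₀, ← Real.rpow_natCast (c ^ (-(1:ℝ)/2)) 2, ← Real.rpow_mul hc0.le]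
      norm_num [Real.rpow_neg_one]
    rw [this]
    field_simp
  have hψp : c * ψ ω₀ x ^ p = φ x ^ p := by
    rw [hψx, Real.mul_rpow (Real.rpow_pos_of_pos hc0 _).le (hpos x).le,
      ← Real.rpow_mul hc0.le]
    rw [show (-(1:ℝ)/p) * p = -1 by field_simp]
    rw [Real.rpow_neg_one]
    field_simp
  -- conclude
  rw [hΨdd, hΨ x]
  have hDD : deriv (deriv (Dψ ω₀)) x
      = (-(2*ω₀)) * ψ ω₀ x + (1 - ω₀ ^ 2) * Dψ ω₀ x - (p+1) * ψ ω₀ x ^ p * Dψ ω₀ x := by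
    linarith [hDzero]
  rw [hDD]
  linear_combination hKφ + (k * Dψ ω₀ x) * hω2 - (p+1) * (k * Dψ ω₀ x) * hψp
end

section
/- Let H be a real Hilbert space and A : D(A) ⊂ H → H a self-adjoint operator whose spectrum consists of a simple negative eigenvalue μ₀ < 0 with normalized eigenfunction ξ₀, the simple eigenvalue 0 with kernel spanned by a vector k, and the rest of the spectrum contained in [σ, ∞) for some σ > 0. Let Ψ ∈ D(A) with ⟨AΨ, Ψ⟩ < 0, and set τ = AΨ. Then there exists a constant κ > 0 such that for all ξ ∈ D(A) with ⟨ξ, k⟩ = 0 and ⟨ξ, τ⟩ = 0, one has ⟨Aξ, ξ⟩ ≥ κ‖ξ‖². -/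
open scoped RealInnerProductSpace

/-!
Write `ξ = a ξ₀ + g` and `Ψ = c ξ₀ + p + d k` with `g, p ⊥ ξ₀, k`. The form `⟪A ·, ·⟫` equals
`μ₀ a² + ⟪A g, g⟫` at `ξ` and `μ₀ c² + ⟪A p, p⟫ < 0` at `Ψ`, and the constraint `⟪ξ, A Ψ⟫ = 0`
reads `μ₀ a c = -⟪A g, p⟫`. The form is positive on `{ξ₀, k}ᗮ`, so Cauchy–Schwarz gives
`μ₀² a² c² ≤ ⟪A g, g⟫ ⟪A p, p⟫ < ⟪A g, g⟫ |μ₀| c²`: the negative part `μ₀ a²` costs only a fixed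
fraction `θ < 1` of `⟪A g, g⟫`, which in turn controls both `a²` and `σ ‖g‖²`.
-/

theorem exists_pos_mul_sq_add_le {μ σ c β : ℝ} (hμ : μ < 0) (hσ : 0 < σ) (hβ : 0 ≤ β)
    (hneg : μ * c ^ 2 + β < 0) :
    ∃ κ > 0, ∀ a n γ : ℝ, σ * n ≤ γ → (μ * a * c) ^ 2 ≤ γ * β →
      κ * (a ^ 2 + n) ≤ μ * a ^ 2 + γ := by
  have hD : 0 < σ * β + μ ^ 2 * c ^ 2 := by
    have : c ≠ 0 := by rintro rfl; linarith
    have := hμ.ne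
    positivity
  have hN : 0 < σ * (μ * (μ * c ^ 2 + β)) := mul_pos hσ (mul_pos_of_neg_of_neg hμ hneg)
  -- with `θ = β / (|μ| c²) < 1` this is `κ = (1 - θ) / (θ / |μ| + 1 / σ)`
  refine ⟨_, div_pos hN hD, fun a n γ hγ hcs ↦ ?_⟩
  rw [div_mul_eq_mul_div, div_le_iff₀ hD]
  have h₁ : 0 ≤ (σ - μ) * (γ * β - (μ * a * c) ^ 2) := mul_nonneg (by linarith) (by linarith)
  have h₂ : 0 ≤ μ * (μ * c ^ 2 + β) * (γ - σ * n) :=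
    mul_nonneg (mul_pos_of_neg_of_neg hμ hneg).le (by linarith)
  linear_combination h₁ + h₂

namespace LinearMap.IsSymmetric

variable {H : Type*} [NormedAddCommGroup H] [InnerProductSpace ℝ H] {A : H →ₗ[ℝ] H}

theorem inner_map_add_smul_self (hA : A.IsSymmetric) (x y : H) (t : ℝ) :
    ⟪A (x + t • y), x + t • y⟫ = ⟪A y, y⟫ * (t * t) + 2 * ⟪A x, y⟫ * t + ⟪A x, x⟫ := by
  have : ⟪A y, x⟫ = ⟪A x, y⟫ := by rw [hA, real_inner_comm]
  simp only [map_add, map_smul, inner_add_left, inner_add_right, real_inner_smul_left,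
    real_inner_smul_right, this]
  ring

theorem inner_map_sq_le (hA : A.IsSymmetric) {x y : H}
    (h : ∀ t : ℝ, 0 ≤ ⟪A (x + t • y), x + t • y⟫) :
    ⟪A x, y⟫ ^ 2 ≤ ⟪A x, x⟫ * ⟪A y, y⟫ := by
  have := discrim_le_zero fun t ↦ (hA.inner_map_add_smul_self x y t ▸ h t)
  rw [discrim] at this
  linarith

theorem inner_eq_zero_of_eigenvector_of_mem_ker (hA : A.IsSymmetric) {e k : H} {μ : ℝ}
    (hμ : μ ≠ 0) (he : A e = μ • e) (hk : A k = 0) : ⟪e, k⟫ = 0 := by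
  have := hA e k
  rw [he, hk, inner_zero_right, real_inner_smul_left] at this
  exact (mul_eq_zero.mp this).resolve_left hμ

theorem inner_map_smul_add_smul_add (hA : A.IsSymmetric) {e : H} {μ : ℝ} (he : ‖e‖ = 1)
    (hAe : A e = μ • e) {g p : H} (hg : ⟪g, e⟫ = 0) (hp : ⟪p, e⟫ = 0) (a c : ℝ) :
    ⟪A (a • e + g), c • e + p⟫ = μ * a * c + ⟪A g, p⟫ := by
  have hAg : ⟪A g, e⟫ = 0 := by rw [hA, hAe, real_inner_smul_right, hg, mul_zero]
  rw [map_add, map_smul, hAe, smul_smul]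
  simp only [inner_add_left, inner_add_right, real_inner_smul_left, real_inner_smul_right,
    real_inner_self_eq_norm_sq, he, real_inner_comm p e, hp, hAg]
  ring

theorem exists_coercive_of_inner_map_eq_zero (hA : A.IsSymmetric) {e : H} {μ : ℝ}
    (hμ : μ < 0) (he : ‖e‖ = 1) (hAe : A e = μ • e) {V : Submodule ℝ H} (hVe : V ≤ (ℝ ∙ e)ᗮ)
    {σ : ℝ} (hσ : 0 < σ) (hV : ∀ g ∈ V, σ * ‖g‖ ^ 2 ≤ ⟪A g, g⟫) {c : ℝ} {p : H} (hp : p ∈ V)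
    (hneg : ⟪A (c • e + p), c • e + p⟫ < 0) :
    ∃ κ > 0, ∀ a : ℝ, ∀ g ∈ V, ⟪A (a • e + g), c • e + p⟫ = 0 →
      κ * ‖a • e + g‖ ^ 2 ≤ ⟪A (a • e + g), a • e + g⟫ := by
  have orth {g} (hg : g ∈ V) : ⟪g, e⟫ = 0 :=
    Submodule.mem_orthogonal_singleton_iff_inner_left.mp (hVe hg)
  have hV₀ {g} (hg : g ∈ V) : 0 ≤ ⟪A g, g⟫ := le_trans (by positivity) (hV g hg)
  rw [hA.inner_map_smul_add_smul_add he hAe (orth hp) (orth hp), mul_assoc, ← sq] at hneg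
  obtain ⟨κ, hκ, hbound⟩ := exists_pos_mul_sq_add_le hμ hσ (hV₀ hp) hneg
  refine ⟨κ, hκ, fun a g hg h ↦ ?_⟩
  rw [hA.inner_map_smul_add_smul_add he hAe (orth hg) (orth hp)] at h
  have hnorm : ‖a • e + g‖ ^ 2 = a ^ 2 + ‖g‖ ^ 2 := by
    have hperp : ⟪a • e, g⟫ = 0 := by rw [real_inner_smul_left, real_inner_comm, orth hg, mul_zero]
    rw [sq, norm_add_sq_eq_norm_sq_add_norm_sq_real hperp, norm_smul, he, Real.norm_eq_abs,
      mul_one, abs_mul_abs_self, sq, sq]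
  have hcs : ⟪A g, p⟫ ^ 2 ≤ ⟪A g, g⟫ * ⟪A p, p⟫ :=
    hA.inner_map_sq_le fun t ↦ hV₀ (V.add_mem hg (V.smul_mem t hp))
  rw [hnorm, hA.inner_map_smul_add_smul_add he hAe (orth hg) (orth hg), mul_assoc, ← sq]
  exact hbound a _ _ (hV g hg) (by rwa [show μ * a * c = -⟪A g, p⟫ by linarith, neg_sq])

end LinearMap.IsSymmetric

theorem stmt10_general {H : Type*} [NormedAddCommGroup H] [InnerProductSpace ℝ H]
    (A : H →ₗ[ℝ] H) (hsym : ∀ x y, ⟪A x, y⟫ = ⟪x, A y⟫)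
    (μ₀ : ℝ) (hμ₀ : μ₀ < 0) (ξ₀ : H) (hξ₀norm : ‖ξ₀‖ = 1) (hAξ₀ : A ξ₀ = μ₀ • ξ₀)
    (k : H) (hAk : A k = 0)
    (σ : ℝ) (hσ : 0 < σ)
    (hpos : ∀ g, ⟪g, ξ₀⟫ = 0 → ⟪g, k⟫ = 0 → σ * ‖g‖ ^ 2 ≤ ⟪A g, g⟫)
    (Ψ : H) (hΨ : ⟪A Ψ, Ψ⟫ < 0) (τ : H) (hτ : τ = A Ψ) :
    ∃ κ : ℝ, 0 < κ ∧ ∀ ξ : H, ⟪ξ, k⟫ = 0 → ⟪ξ, τ⟫ = 0 →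
      κ * ‖ξ‖ ^ 2 ≤ ⟪A ξ, ξ⟫ := by
  have hA : A.IsSymmetric := hsym
  have hξ₀k : ⟪ξ₀, k⟫ = 0 := hA.inner_eq_zero_of_eigenvector_of_mem_ker hμ₀.ne hAξ₀ hAk
  have hV : ∀ g ∈ (ℝ ∙ ξ₀)ᗮ ⊓ (ℝ ∙ k)ᗮ, σ * ‖g‖ ^ 2 ≤ ⟪A g, g⟫ := fun g hg ↦
    hpos g (Submodule.mem_orthogonal_singleton_iff_inner_left.mp hg.1)
      (Submodule.mem_orthogonal_singleton_iff_inner_left.mp hg.2)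
  obtain ⟨y, hy, p, hp, rfl⟩ := (ℝ ∙ ξ₀ ⊔ ℝ ∙ k).exists_add_mem_mem_orthogonal Ψ
  obtain ⟨_, hc, _, hd, rfl⟩ := Submodule.mem_sup.mp hy
  obtain ⟨c, rfl⟩ := Submodule.mem_span_singleton.mp hc
  obtain ⟨d, rfl⟩ := Submodule.mem_span_singleton.mp hd
  rw [← Submodule.inf_orthogonal] at hp
  have hAΨ : A (c • ξ₀ + d • k + p) = A (c • ξ₀ + p) := by
    rw [add_right_comm, map_add _ (c • ξ₀ + p), map_smul, hAk, smul_zero, add_zero]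
  have hdk (x : H) : ⟪A x, c • ξ₀ + d • k + p⟫ = ⟪A x, c • ξ₀ + p⟫ := by
    rw [hsym, hsym, hAΨ]
  have hneg : ⟪A (c • ξ₀ + p), c • ξ₀ + p⟫ < 0 := by rwa [hAΨ, hdk] at hΨ
  obtain ⟨κ, hκ, hcoer⟩ :=
    hA.exists_coercive_of_inner_map_eq_zero hμ₀ hξ₀norm hAξ₀ inf_le_left hσ hV hp hneg
  refine ⟨κ, hκ, fun ξ hξk hξτ ↦ ?_⟩
  obtain ⟨_, ha, g, hg, rfl⟩ := (ℝ ∙ ξ₀).exists_add_mem_mem_orthogonal ξ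
  obtain ⟨a, rfl⟩ := Submodule.mem_span_singleton.mp ha
  have hgk : g ∈ (ℝ ∙ k)ᗮ := by
    rw [Submodule.mem_orthogonal_singleton_iff_inner_left]
    rwa [inner_add_left, real_inner_smul_left, hξ₀k, mul_zero, zero_add] at hξk
  exact hcoer a g ⟨hg, hgk⟩ (by rwa [← hdk, hsym, ← hτ])

/-- Abstract coercivity of a self-adjoint operator with one simple negative
eigenvalue, one-dimensional kernel, and positive remaining spectrum, on the
subspace orthogonal to the kernel and to `τ = AΨ` for a negative direction `Ψ`. -/
theorem stmt10 {H : Type*} [NormedAddCommGroup H] [InnerProductSpace ℝ H]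
    [CompleteSpace H]
    (A : H →ₗ[ℝ] H) (hsym : ∀ x y, ⟪A x, y⟫ = ⟪x, A y⟫)
    (μ₀ : ℝ) (hμ₀ : μ₀ < 0) (ξ₀ : H) (hξ₀norm : ‖ξ₀‖ = 1) (hAξ₀ : A ξ₀ = μ₀ • ξ₀)
    (k : H) (hk : k ≠ 0) (hAk : A k = 0)
    (hker : ∀ x, A x = 0 → ∃ a : ℝ, x = a • k)
    (σ : ℝ) (hσ : 0 < σ)
    (hpos : ∀ g, ⟪g, ξ₀⟫ = 0 → ⟪g, k⟫ = 0 → σ * ‖g‖ ^ 2 ≤ ⟪A g, g⟫)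
    (Ψ : H) (hΨ : ⟪A Ψ, Ψ⟫ < 0) (τ : H) (hτ : τ = A Ψ) :
    ∃ κ : ℝ, 0 < κ ∧ ∀ ξ : H, ⟪ξ, k⟫ = 0 → ⟪ξ, τ⟫ = 0 →
      κ * ‖ξ‖ ^ 2 ≤ ⟪A ξ, ξ⟫ :=
  stmt10_general A hsym μ₀ hμ₀ ξ₀ hξ₀norm hAξ₀ k hAk σ hσ hpos Ψ hΨ τ hτ
end

section
/- Let H be a real Hilbert space and A : D(A) → H a self-adjoint operator with exactly one simple negative eigenvalue μ₀ and eigenvector ξ₀, kernel spanned by k, and the rest of the spectrum positive (bounded below by σ > 0 on the orthogonal complement). Suppose η ∈ D(A), η ∉ ker A, satisfies ⟨Aη, η⟩ ≤ 0. Then for every ζ ∈ D(A) with ⟨Aζ, η⟩ = 0 one has ⟨Aζ, ζ⟩ ≥ 0. -/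
open scoped RealInnerProductSpace

set_option maxHeartbeats 400000

/-- If the quadratic form of `A` is nonpositive at some `η` not in the kernel,
then it is nonnegative on the `A`-orthogonal complement of `η`. -/
theorem stmt11 {H : Type*} [NormedAddCommGroup H] [InnerProductSpace ℝ H]
    [CompleteSpace H]
    (A : H →ₗ[ℝ] H) (hsym : ∀ x y, ⟪A x, y⟫ = ⟪x, A y⟫)
    (μ₀ : ℝ) (hμ₀ : μ₀ < 0) (ξ₀ : H) (hξ₀norm : ‖ξ₀‖ = 1) (hAξ₀ : A ξ₀ = μ₀ • ξ₀)
    (k : H) (hk : k ≠ 0) (hAk : A k = 0)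
    (hker : ∀ x, A x = 0 → ∃ a : ℝ, x = a • k)
    (σ : ℝ) (hσ : 0 < σ)
    (hpos : ∀ g, ⟪g, ξ₀⟫ = 0 → ⟪g, k⟫ = 0 → σ * ‖g‖ ^ 2 ≤ ⟪A g, g⟫)
    (η : H) (hη : A η ≠ 0) (hηneg : ⟪A η, η⟫ ≤ 0) :
    ∀ ζ : H, ⟪A ζ, η⟫ = 0 → 0 ≤ ⟪A ζ, ζ⟫ := by
  intro ζ hζ
  have hkk : ⟪k, k⟫ ≠ (0 : ℝ) := by
    simpa [real_inner_self_eq_norm_sq, pow_eq_zero_iff] using hk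
  have hξξ : ⟪ξ₀, ξ₀⟫ = (1 : ℝ) := by
    rw [real_inner_self_eq_norm_sq, hξ₀norm]; norm_num
  have hμ₀ne : μ₀ ≠ 0 := ne_of_lt hμ₀
  have hξk : ⟪ξ₀, k⟫ = (0 : ℝ) := by
    have h1 : ⟪A ξ₀, k⟫ = (0 : ℝ) := by rw [hsym, hAk, inner_zero_right]
    rw [hAξ₀, real_inner_smul_left] at h1
    rcases mul_eq_zero.mp h1 with h | h
    · exact absurd h hμ₀ne
    · exact h
  -- decomposition
  set g : H → H := fun x => x - ⟪x, ξ₀⟫ • ξ₀ - (⟪x, k⟫ / ⟪k, k⟫) • k with hg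
  have hkξ : ⟪k, ξ₀⟫ = (0 : ℝ) := by rw [real_inner_comm]; exact hξk
  have hgξ : ∀ x, ⟪g x, ξ₀⟫ = (0 : ℝ) := by
    intro x
    simp only [hg, inner_sub_left, real_inner_smul_left]
    rw [hξξ, hkξ]
    ring
  have hgk : ∀ x, ⟪g x, k⟫ = (0 : ℝ) := by
    intro x
    simp only [hg, inner_sub_left, real_inner_smul_left]
    rw [hξk, div_mul_cancel₀ _ hkk]
    ring
  have hAgξ : ∀ x, ⟪A (g x), ξ₀⟫ = (0 : ℝ) := by
    intro x
    rw [hsym, hAξ₀, real_inner_smul_right, hgξ, mul_zero]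
  have hAgk : ∀ x, ⟪A (g x), k⟫ = (0 : ℝ) := by
    intro x
    rw [hsym, hAk, inner_zero_right]
  have hdecomp : ∀ x : H, x = ⟪x, ξ₀⟫ • ξ₀ + (⟪x, k⟫ / ⟪k, k⟫) • k + g x := by
    intro x; simp only [hg]; abel
  have hAx : ∀ x : H, A x = (μ₀ * ⟪x, ξ₀⟫) • ξ₀ + A (g x) := by
    intro x
    conv_lhs => rw [hdecomp x]
    rw [map_add, map_add, map_smul, map_smul, hAξ₀, hAk, smul_zero, smul_smul,
      mul_comm]
    abel
  have hξy : ∀ y : H, ⟪ξ₀, y⟫ = ⟪y, ξ₀⟫ := fun y => real_inner_comm _ _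
  have key : ∀ x y : H, ⟪A x, y⟫ = μ₀ * ⟪x, ξ₀⟫ * ⟪y, ξ₀⟫ + ⟪A (g x), g y⟫ := by
    intro x y
    rw [hAx x, inner_add_left, real_inner_smul_left, hξy]
    have h2 : ⟪A (g x), y⟫ = ⟪A (g x), g y⟫ := by
      conv_lhs => rw [hdecomp y]
      rw [inner_add_right, inner_add_right, real_inner_smul_right,
        real_inner_smul_right, hAgξ, hAgk]
      ring
    rw [h2]
  have hq : ∀ u : H, ⟪u, ξ₀⟫ = 0 → ⟪u, k⟫ = 0 → 0 ≤ ⟪A u, u⟫ := by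
    intro u h1 h2
    have := hpos u h1 h2
    nlinarith [sq_nonneg ‖u‖]
  have hqg : ∀ x : H, 0 ≤ ⟪A (g x), g x⟫ := fun x => hq _ (hgξ x) (hgk x)
  -- Cauchy-Schwarz for the form on the positive subspace
  have CS : ⟪A (g ζ), g η⟫ ^ 2 ≤ ⟪A (g ζ), g ζ⟫ * ⟪A (g η), g η⟫ := by
    have hquad : ∀ t : ℝ,
        0 ≤ ⟪A (g η), g η⟫ * (t * t) + (2 * ⟪A (g ζ), g η⟫) * t + ⟪A (g ζ), g ζ⟫ := by
      intro t
      have h1 : ⟪(g ζ + t • g η), ξ₀⟫ = (0 : ℝ) := by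
        rw [inner_add_left, real_inner_smul_left, hgξ, hgξ]; ring
      have h2 : ⟪(g ζ + t • g η), k⟫ = (0 : ℝ) := by
        rw [inner_add_left, real_inner_smul_left, hgk, hgk]; ring
      have h3 := hq _ h1 h2
      have hexp : ⟪A (g ζ + t • g η), g ζ + t • g η⟫ =
          ⟪A (g η), g η⟫ * (t * t) + (2 * ⟪A (g ζ), g η⟫) * t + ⟪A (g ζ), g ζ⟫ := by
        rw [map_add, map_smul, inner_add_left, inner_add_right, inner_add_right,
          real_inner_smul_left, real_inner_smul_right, real_inner_smul_left,
          real_inner_smul_right]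
        have hsym' : ⟪A (g η), g ζ⟫ = ⟪A (g ζ), g η⟫ := by
          rw [hsym, real_inner_comm]
        rw [hsym']
        ring
      linarith [hexp ▸ h3]
    have hd := discrim_le_zero hquad
    rw [discrim] at hd
    nlinarith [hd]
  set aη : ℝ := ⟪η, ξ₀⟫ with haηdef
  set aζ : ℝ := ⟪ζ, ξ₀⟫ with haζdef
  set qη : ℝ := ⟪A (g η), g η⟫ with hqηdef
  set qζ : ℝ := ⟪A (g ζ), g ζ⟫ with hqζdef
  have hneg : μ₀ * aη * aη + qη ≤ 0 := by rw [← key η η]; exact hηneg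
  have horth : μ₀ * aζ * aη + ⟪A (g ζ), g η⟫ = 0 := by rw [← key ζ η]; exact hζ
  have haη : aη ≠ 0 := by
    intro h0
    have hqη0 : qη ≤ 0 := by rw [h0] at hneg; linarith
    have hgη0 : g η = 0 := by
      have := hpos (g η) (hgξ η) (hgk η)
      have hn : ‖g η‖ ^ 2 ≤ 0 := by nlinarith
      have : ‖g η‖ = 0 := by nlinarith [sq_nonneg ‖g η‖, norm_nonneg (g η)]
      exact norm_eq_zero.mp this
    have : A η = 0 := by rw [hAx η, ← haηdef, h0, mul_zero, zero_smul, hgη0,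
      map_zero, zero_add]
    exact hη this
  rw [key ζ ζ]
  have hb : ⟪A (g ζ), g η⟫ = -(μ₀ * aζ * aη) := by linarith
  rw [hb] at CS
  have hqζ0 := hqg ζ
  have hqη0 := hqg η
  rw [← hqζdef] at hqζ0
  rw [← hqηdef] at hqη0
  have haη2 : 0 < aη ^ 2 := lt_of_le_of_ne (sq_nonneg _) (Ne.symm (pow_ne_zero 2 haη))
  nlinarith [sq_nonneg aζ, mul_nonneg hqζ0 hqη0, sq_nonneg (aζ * aη), mul_pos (neg_pos.mpr hμ₀) haη2]
end

section
/- Let u ∈ C¹(ℝ, H¹(ℝ)) solve the gBBM equation ∂_t u = -(1-∂_x²)^{-1}∂_x(u + |u|^p u), and set H(u) = -(1-∂_x²)^{-1}(u + |u|^p u), so that ∂_x H(u) = u_t. Then pointwise in (t,x): ∂_t( (1/2)u² + (1/(p+2))|u|^{p+2} ) = -(1/2)∂_x[ (H(u))² - (u_t)² ]. -/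
open Real

/-! The time derivative of the energy density is `(u + |u|^p u) uₜ`. Substituting the equation
`u + |u|^p u = -H + ∂ₓuₜ` and `∂ₓH = uₜ` turns it into `-H uₜ + uₜ ∂ₓuₜ = -½ ∂ₓ(H² - uₜ²)`. -/

theorem hasDerivAt_half_sq_add_abs_rpow {p : ℝ} (hp : -1 < p) (v : ℝ) :
    HasDerivAt (fun w : ℝ => 1 / 2 * w ^ 2 + 1 / (p + 2) * |w| ^ (p + 2))
      (v + |v| ^ p * v) v := by
  have hp2 : p + 2 ≠ 0 := by linarith
  have hsq := (hasDerivAt_pow 2 v).const_mul (1 / 2 : ℝ)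
  have habs := (hasDerivAt_abs_rpow v (by linarith : 1 < p + 2)).const_mul (1 / (p + 2))
  refine (hsq.add habs).congr_deriv ?_
  field_simp
  ring_nf

theorem deriv_sq_sub_sq {f g : ℝ → ℝ} {x : ℝ} (hf : DifferentiableAt ℝ f x)
    (hg : DifferentiableAt ℝ g x) :
    deriv (fun y => f y ^ 2 - g y ^ 2) x = 2 * f x * deriv f x - 2 * g x * deriv g x := by
  refine ((hf.hasDerivAt.fun_pow 2).fun_sub (hg.hasDerivAt.fun_pow 2)).deriv.trans ?_
  ring

/-- Pointwise flux identity for solutions of the gBBM equation: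
`∂ₜ(½u² + |u|^{p+2}/(p+2)) = -½ ∂ₓ[(H(u))² - uₜ²]`. -/
theorem stmt19 (p : ℝ) (hp : 0 < p) (u H ut : ℝ → ℝ → ℝ)
    (hut : ∀ t x, HasDerivAt (fun s => u s x) (ut t x) t)
    (hHdiff : ∀ t, Differentiable ℝ (H t))
    (hutdiff : ∀ t, Differentiable ℝ (ut t))
    (hHx : ∀ t x, deriv (H t) x = ut t x)
    (hEq : ∀ t x, u t x + |u t x| ^ p * u t x = -(H t x) + deriv (ut t) x) :
    ∀ t x, HasDerivAt
      (fun s => (1 / 2) * (u s x) ^ 2 + (1 / (p + 2)) * |u s x| ^ (p + 2))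
      (-(1 / 2) * deriv (fun y => (H t y) ^ 2 - (ut t y) ^ 2) x) t := by
  intro t x
  have hdensity := (hasDerivAt_half_sq_add_abs_rpow (by linarith) (u t x)).comp t (hut t x)
  refine hdensity.congr_deriv ?_
  rw [deriv_sq_sub_sq (hHdiff t x) (hutdiff t x), hHx, hEq]
  ring
end
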